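/- Serializability supports overwriting: there exists a serializable history H (with unique writes) containing transactions T_i and T_j such that T_i releases some variable x early in H, H|T_i contains write executions w_i(x,v)→ok_i and w_i(x,v')→ok_i with the former preceding the latter in H|T_i, and H|T_j contains a read execution r_j(x)→v that precedes w_i(x,v')→ok_i in H. -/

import Mathlib

/-!
Formal model of transactional memory (TM) histories, following Siek &
Wojciechowski, "Last-use Opacity: A Strong Safety Property for Transactional
Memory with Early Release Support".

Transactions and shared variables are indexed by natural numbers; values of
variables are natural numbers with initial value 0.
-/

namespace TM

open Classical

/-- Transactional operations: `init`, read of a variable, write of a value to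
a variable, `tryCommit` and `tryAbort`. -/
inductive Op : Type
  | init : Op
  | read : ℕ → Op
  | write : ℕ → ℕ → Op
  | tryCommit : Op
  | tryAbort : Op
  deriving DecidableEq

/-- Responses: `ok`, a value (for reads), commit `C_i`, abort `A_i`. -/
inductive Resp : Type
  | ok : Resp
  | value : ℕ → Resp
  | committed : Resp
  | aborted : Resp
  deriving DecidableEq

/-- Invocation and response events, tagged with the transaction executing them. -/
inductive Event : Type
  | inv : ℕ → Op → Event
  | res : ℕ → Resp → Event
  deriving DecidableEq

/-- The transaction executing an event. -/
def Event.txn : Event → ℕ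
  | .inv t _ => t
  | .res t _ => t

/-- A history is a finite sequence of events. -/
abbrev History := List Event

/-- `proj i H` is `H|T_i`, the subsequence of events of transaction `i`. -/
def proj (i : ℕ) (H : History) : History :=
  H.filter (fun e => e.txn == i)

/-- Transaction `i` is in `H` (`H|T_i ≠ ∅`). -/
def inTxn (H : History) (i : ℕ) : Prop := proj i H ≠ []

/-- `T_i` is committed in `H`: `H|T_i` contains `tryC_i → C_i`. -/
def committed (H : History) (i : ℕ) : Prop :=
  List.Sublist [Event.inv i Op.tryCommit, Event.res i Resp.committed] (proj i H)

/-- `T_i` is aborted in `H`: `H|T_i` contains a response `A_i`. -/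
def aborted (H : History) (i : ℕ) : Prop :=
  Event.res i Resp.aborted ∈ proj i H

/-- `T_i` is commit-pending in `H`. -/
def commitPending (H : History) (i : ℕ) : Prop :=
  Event.inv i Op.tryCommit ∈ proj i H ∧
    Event.res i Resp.committed ∉ proj i H ∧ Event.res i Resp.aborted ∉ proj i H

/-- `T_i` is live in `H`. -/
def live (H : History) (i : ℕ) : Prop :=
  inTxn H i ∧ ¬ committed H i ∧ ¬ aborted H i ∧ ¬ commitPending H i

/-- A complete operation execution by transaction `i` in `H`: the invocation
is at position `ki`, its matching response at position `kr` (no events of `i`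
in between). -/
def opExec (H : History) (i ki kr : ℕ) (o : Op) (r : Resp) : Prop :=
  ki < kr ∧ H[ki]? = some (Event.inv i o) ∧ H[kr]? = some (Event.res i r) ∧
    ∀ (m : ℕ) (e : Event), ki < m → m < kr → H[m]? = some e → e.txn ≠ i

def isInvEvent : Event → Prop
  | .inv _ _ => True
  | .res _ _ => False

def isResEvent : Event → Prop
  | .inv _ _ => False
  | .res _ _ => True

/-- Well-formedness of `H|T_i` (as the list `L`): alternation of invocations
and responses starting with `init_i`, no events after a commit/abort response,
and no invocation after an invocation of `tryC_i` or `tryA_i`. -/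
def wellFormedTxn (L : History) (i : ℕ) : Prop :=
  (∀ (k : ℕ) (e : Event), L[k]? = some e →
      ((k % 2 = 0 → isInvEvent e) ∧ (k % 2 = 1 → isResEvent e))) ∧
  (L ≠ [] → L[0]? = some (Event.inv i Op.init)) ∧
  (∀ k : ℕ, (L[k]? = some (Event.res i Resp.committed) ∨
      L[k]? = some (Event.res i Resp.aborted)) → L.length = k + 1) ∧
  (∀ (k : ℕ) (o : Op), L[k]? = some (Event.inv i o) → (o = Op.tryCommit ∨ o = Op.tryAbort) →
      ∀ (m : ℕ) (o' : Op), L[m]? = some (Event.inv i o') → m ≤ k)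

/-- A well-formed history. -/
def wellFormed (H : History) : Prop :=
  ∀ i : ℕ, wellFormedTxn (proj i H) i

/-- Unique writes: distinct write executions write distinct values, all
different from the initial value 0. -/
def uniqueWrites (H : History) : Prop :=
  ∀ (k1 k2 i1 i2 x1 x2 v1 v2 : ℕ),
    H[k1]? = some (Event.inv i1 (Op.write x1 v1)) →
    H[k2]? = some (Event.inv i2 (Op.write x2 v2)) →
    v1 ≠ 0 ∧ (k1 ≠ k2 → v1 ≠ v2)

/-- Two histories are equivalent if they agree on every `H|T_i`. -/
def equivH (H1 H2 : History) : Prop := ∀ i : ℕ, proj i H1 = proj i H2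

/-- Real-time precedence: the last event of `H|T_i` precedes the first event
of `H|T_j` in `H`. -/
def rtPrec (H : History) (i j : ℕ) : Prop :=
  ∃ k l : ℕ, k < l ∧
    (∃ e : Event, H[k]? = some e ∧ e.txn = i) ∧
    (∃ e : Event, H[l]? = some e ∧ e.txn = j) ∧
    (∀ (m : ℕ) (e : Event), H[m]? = some e → e.txn = i → m ≤ k) ∧
    (∀ (m : ℕ) (e : Event), H[m]? = some e → e.txn = j → l ≤ m)

/-- `S` preserves the real-time order of `H`. -/
def preservesRT (H S : History) : Prop := ∀ i j : ℕ, rtPrec H i j → rtPrec S i j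

/-- A sequential history: any two distinct transactions are comparable in the
real-time order. -/
def sequential (S : History) : Prop :=
  ∀ i j : ℕ, inTxn S i → inTxn S j → i ≠ j → rtPrec S i j ∨ rtPrec S j i

/-- The read of value `v` on variable `x` invoked at position `ki` is
consistent with the sequential specification of `x`: the latest write to `x`
completed before it writes `v`, or there is no such write and `v = 0`. -/
def readsLegally (S : History) (x v ki : ℕ) : Prop :=
  (∃ j kwi kwr : ℕ, kwr < ki ∧ opExec S j kwi kwr (Op.write x v) Resp.ok ∧
      ∀ j' v' kwi' kwr' : ℕ,
        opExec S j' kwi' kwr' (Op.write x v') Resp.ok → kwr' < ki → kwr' ≤ kwr)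
  ∨ (v = 0 ∧ ∀ j v' kwi kwr : ℕ, opExec S j kwi kwr (Op.write x v') Resp.ok → ¬ kwr < ki)

/-- A (sequential) history is legal if its restriction to every variable is in
the variable's sequential specification, i.e. every complete read is
consistent with the latest preceding write. -/
def isLegal (S : History) : Prop :=
  ∀ i x v ki kr : ℕ, opExec S i ki kr (Op.read x) (Resp.value v) → readsLegally S x v ki

/-- Transaction `i` has the pending (unanswered) invocation of `o` in `H`. -/
def pendingInv (H : History) (i : ℕ) (o : Op) : Prop :=
  (proj i H).getLast? = some (Event.inv i o)

/-- `C` is a completion `Compl(H)` of `H`. -/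
def isCompletion (H C : History) : Prop :=
  H <+: C ∧
  (∀ i : ℕ, inTxn C i → inTxn H i) ∧
  (∀ i : ℕ, inTxn C i → committed C i ∨ aborted C i) ∧
  ∀ i : ℕ, inTxn H i →
    ((committed H i ∨ aborted H i) → proj i C = proj i H) ∧
    (¬ committed H i → ¬ aborted H i →
      (pendingInv H i Op.tryCommit →
          proj i C = proj i H ++ [Event.res i Resp.committed]) ∧
      ((∃ o : Op, o ≠ Op.tryCommit ∧ pendingInv H i o) →
          proj i C = proj i H ++ [Event.res i Resp.aborted]) ∧
      ((¬ ∃ o : Op, pendingInv H i o) →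
          proj i C = proj i H ++ [Event.inv i Op.tryCommit, Event.res i Resp.aborted]))

/-- Restriction of a history to the events of a set of transactions. -/
noncomputable def restrictTxns (S : History) (T : Set ℕ) : History :=
  S.filter (fun e => decide (e.txn ∈ T))

/-- `Vis(S,T_i)`: the longest subhistory of `S` containing, for each `T_j` in
`S`, the events of `T_j` iff `j = i` or (`T_j` is committed and `T_j ≺_S T_i`). -/
noncomputable def Vis (S : History) (i : ℕ) : History :=
  restrictTxns S {j | j = i ∨ (committed S j ∧ rtPrec S j i)}

/-- `T_i` is legal in `S` if `Vis(S,T_i)` is legal. -/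
def legalIn (S : History) (i : ℕ) : Prop := isLegal (Vis S i)

/-- Serializability. -/
def serializable (H : History) : Prop :=
  ∃ C S : History, isCompletion H C ∧ sequential S ∧ equivH S C ∧
    ∀ i : ℕ, inTxn S i → committed S i → legalIn S i

/-- The read invoked at position `ki` by `T_j` on `x` is non-local: no write
to `x` by `T_j` precedes it. -/
def nonLocalReadAt (H : History) (j x ki : ℕ) : Prop :=
  ∀ m v : ℕ, m < ki → H[m]? ≠ some (Event.inv j (Op.write x v))

/-- `T_i` releases variable `x` early in `H`. -/
def releasesEarly (H : History) (i x : ℕ) : Prop :=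
  ∃ P : History, P <+: H ∧ live P i ∧
    ∃ j v wki wkr rki rkr : ℕ, j ≠ i ∧
      opExec P i wki wkr (Op.write x v) Resp.ok ∧
      opExec P j rki rkr (Op.read x) (Resp.value v) ∧
      nonLocalReadAt P j x rki ∧
      wkr < rki

/-- Overwriting by `T_i` observed by `T_j` on variable `x` in `H`. -/
def overwriting (H : History) (i j x : ℕ) : Prop :=
  i ≠ j ∧ releasesEarly H i x ∧
  ∃ v v' k1i k1r k2i k2r kri krr : ℕ,
    opExec H i k1i k1r (Op.write x v) Resp.ok ∧
    opExec H i k2i k2r (Op.write x v') Resp.ok ∧ k1r < k2i ∧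
    opExec H j kri krr (Op.read x) (Resp.value v) ∧ krr < k2i

/-- Final-state opacity. -/
def finalStateOpaque (H : History) : Prop :=
  ∃ C S : History, isCompletion H C ∧ sequential S ∧ equivH S C ∧ preservesRT H S ∧
    ∀ i : ℕ, inTxn S i → legalIn S i

/-- Opacity: every finite prefix is final-state opaque. -/
def isOpaque (H : History) : Prop := ∀ P : History, P <+: H → finalStateOpaque P

/-- Causal past of `T_i` in `H`: `T_i` together with the committed or aborted
transactions that precede `T_i` in `H`. -/
def causalPast (H : History) (i : ℕ) : Set ℕ :=
  {j | j = i ∨ ((committed H j ∨ aborted H j) ∧ rtPrec H j i)}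

/-- Virtual world consistency. -/
def VWC (H : History) : Prop :=
  (∃ S : History, sequential S ∧ equivH S (restrictTxns H {j | committed H j}) ∧
      preservesRT H S ∧ ∀ j : ℕ, inTxn S j → committed S j → legalIn S j) ∧
  (∀ i : ℕ, inTxn H i → aborted H i →
      ∃ S : History, sequential S ∧ equivH S (restrictTxns H (causalPast H i)) ∧ isLegal S)

/-! ### Live opacity -/

/-- Index `k` of `L` carries (part of) a read operation execution. -/
def isReadIdx (L : History) (k : ℕ) : Prop :=
  (∃ t x : ℕ, L[k]? = some (Event.inv t (Op.read x))) ∨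
  (1 ≤ k ∧ (∃ t x : ℕ, L[k-1]? = some (Event.inv t (Op.read x))) ∧
    ∃ (t : ℕ) (r : Resp), L[k]? = some (Event.res t r))

/-- Index `k` of `L` carries (part of) a non-local read operation execution. -/
def isNonLocalReadIdx (L : History) (k : ℕ) : Prop :=
  (∃ t x : ℕ, L[k]? = some (Event.inv t (Op.read x)) ∧
      ∀ m t' v : ℕ, m < k → L[m]? ≠ some (Event.inv t' (Op.write x v))) ∨
  (1 ≤ k ∧ (∃ (t : ℕ) (r : Resp), L[k]? = some (Event.res t r)) ∧
    ∃ t x : ℕ, L[k-1]? = some (Event.inv t (Op.read x)) ∧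
      ∀ m t' v : ℕ, m < k - 1 → L[m]? ≠ some (Event.inv t' (Op.write x v)))

/-- The subsequence of `L` of events at indices satisfying `p`. -/
noncomputable def seqOfIdx (L : History) (p : ℕ → Prop) : History :=
  ((List.range L.length).filter (fun k => decide (p k))).filterMap (fun k => L[k]?)

/-- `H|(T_i,r)`: the read operation executions of `T_i`, excluding the last
read if its response is `A_i`. -/
noncomputable def readSeq (H : History) (i : ℕ) : History :=
  let L := proj i H
  let R := seqOfIdx L (isReadIdx L)
  if R.getLast? = some (Event.res i Resp.aborted) then R.dropLast.dropLast else R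

/-- `H|(T_i,gr)`: the non-local read operation executions of `T_i`, excluding
the last read if its response is `A_i`. -/
noncomputable def grSeq (H : History) (i : ℕ) : History :=
  let L := proj i H
  let R := seqOfIdx L (isNonLocalReadIdx L)
  if R.getLast? = some (Event.res i Resp.aborted) then R.dropLast.dropLast else R

/-- The transaction `T_i^gr`. -/
noncomputable def grTxn (H : History) (i : ℕ) : History :=
  if grSeq H i = [] then []
  else [Event.inv i Op.init, Event.res i Resp.ok] ++ grSeq H i ++
       [Event.inv i Op.tryCommit, Event.res i Resp.committed]

/-- `S` justifies the serializability of `H`. -/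
def justifiesSer (S H : History) : Prop :=
  ∃ H' : History, List.Sublist H' H ∧ (∀ e ∈ H', committed H e.txn) ∧
    (∀ j : ℕ, committed H j → proj j H' = proj j H) ∧
    isLegal S ∧ equivH S H'

/-- All complete local reads of `T_i` in `H` have legal responses: the last
preceding write of `T_i` to the variable wrote the value read. -/
def localReadsLegal (H : History) (i : ℕ) : Prop :=
  ∀ x v ki kr : ℕ, opExec (proj i H) i ki kr (Op.read x) (Resp.value v) →
    (∃ m w : ℕ, m < ki ∧ (proj i H)[m]? = some (Event.inv i (Op.write x w))) →
    ∃ m : ℕ, m < ki ∧ (proj i H)[m]? = some (Event.inv i (Op.write x v)) ∧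
      ∀ m' w' : ℕ, m < m' → m' < ki → (proj i H)[m']? ≠ some (Event.inv i (Op.write x w'))

/-- Live opacity. -/
def liveOpaque (H : History) : Prop :=
  ∃ S : History, sequential S ∧ preservesRT H S ∧ justifiesSer S H ∧
    (∃ S' : History, sequential S' ∧ List.Sublist S S' ∧
      (∀ i : ℕ, inTxn H i → ¬ inTxn S i → proj i S' = grTxn H i) ∧
      (∀ i j : ℕ, rtPrec H i j → inTxn S' i → inTxn S' j → rtPrec S' i j) ∧
      isLegal S') ∧
    (∀ i : ℕ, inTxn H i → ¬ inTxn S i → localReadsLegal H i)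

/-! ### Last-use opacity -/

/-- A prefix-closed set of histories (the possible histories of a program). -/
def prefixClosed (E : Set History) : Prop :=
  ∀ H ∈ E, ∀ P : History, P <+: H → P ∈ E

/-- The write execution on `x` by `T_i` at positions `(ki,kr)` is the closing
("last") write on `x` by `T_i` in `H` with respect to the possible histories
`E`: in no extension of `H` in `E` does `T_i` invoke another write on `x`
after it. -/
def closingWrite (E : Set History) (H : History) (i x v ki kr : ℕ) : Prop :=
  opExec H i ki kr (Op.write x v) Resp.ok ∧
  ∀ H' ∈ E, H <+: H' → ∀ m v' : ℕ, H'[m]? = some (Event.inv i (Op.write x v')) → m ≤ ki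

/-- `T_i` decided on `x` in `H` (w.r.t. `E`). -/
def decidedOn (E : Set History) (H : History) (i x : ℕ) : Prop :=
  ∃ v ki kr : ℕ, closingWrite E H i x v ki kr

/-- The variable accessed by an operation. -/
def opVar : Op → Option ℕ
  | .read x => some x
  | .write x _ => some x
  | _ => none

/-- The variable accessed by the event at index `k` of `L` (for a response,
the variable of the matching invocation at `k-1`). -/
def eventVarAt (L : History) (k : ℕ) : Option ℕ :=
  match L[k]? with
  | some (Event.inv _ o) => opVar o
  | some (Event.res _ _) =>
      match L[k-1]? with
      | some (Event.inv _ o) => opVar o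
      | _ => none
  | none => none

/-- The operation execution starting at index `k` of `L` is complete. -/
def completeAt (L : History) (k : ℕ) : Prop :=
  ∀ (t : ℕ) (o : Op), L[k]? = some (Event.inv t o) →
    ∃ (t' : ℕ) (r : Resp), L[k+1]? = some (Event.res t' r)

/-- `Hs⌊T_i` (decided transaction subhistory): the subsequence of `Hs|T_i`
consisting of `init_i` and all complete operation executions on variables on
which `T_i` decided (decidedness judged in `Hd` w.r.t. `E`). -/
noncomputable def lastUseProj (E : Set History) (Hd Hs : History) (i : ℕ) : History :=
  let L := proj i Hs
  seqOfIdx L (fun k => completeAt L k ∧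
    (k ≤ 1 ∨ ∃ x : ℕ, eventVarAt L k = some x ∧ decidedOn E Hd i x))

/-- `Hs⌊^T_i = Hs⌊T_i · [tryC_i → C_i]`. -/
noncomputable def lastUseProjC (E : Set History) (Hd Hs : History) (i : ℕ) : History :=
  lastUseProj E Hd Hs i ++ [Event.inv i Op.tryCommit, Event.res i Resp.committed]

/-- Transactions of a history in order of first occurrence. -/
def txnOrder : History → List ℕ
  | [] => []
  | e :: t => e.txn :: (txnOrder t).filter (fun j => j ≠ e.txn)

/-- The candidate `LUVis(S,T_i)` determined by a choice `inc` of which decided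
non-committed transactions to include: for each transaction `j` of `S` in
order, all of `S|T_j` if `j = i` or `T_j` is committed in `S` and `T_j ≺_S T_i`;
`S⌊^T_j` if `T_j` is non-committed, decided on some variable in `H`,
`T_j ≺_S T_i`, not `T_j ≺_H T_i`, and `inc j` holds; nothing otherwise. -/
noncomputable def buildLUVis (E : Set History) (H S : History) (i : ℕ)
    (inc : ℕ → Prop) : History :=
  (txnOrder S).flatMap (fun j =>
    if j = i ∨ (committed S j ∧ rtPrec S j i) then proj j S
    else if ¬ committed S j ∧ (∃ x : ℕ, decidedOn E H j x) ∧ rtPrec S j i ∧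
        ¬ rtPrec H j i ∧ inc j
      then lastUseProjC E H S j
    else [])

/-- `T_i` is last-use legal in `S`: some admissible `LUVis(S,T_i)` is legal. -/
def lastUseLegal (E : Set History) (H S : History) (i : ℕ) : Prop :=
  ∃ inc : ℕ → Prop, isLegal (buildLUVis E H S i inc)

/-- Final-state last-use opacity with respect to `E`. -/
def finalStateLUOpaque (E : Set History) (H : History) : Prop :=
  ∃ C S : History, isCompletion H C ∧ sequential S ∧ equivH S C ∧ preservesRT H S ∧
    (∀ i : ℕ, inTxn S i → committed S i → legalIn S i) ∧
    (∀ i : ℕ, inTxn S i → ¬ committed S i → lastUseLegal E H S i)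

/-- Last-use opacity with respect to `E`: every finite prefix is final-state
last-use opaque with respect to `E`. -/
def lastUseOpaque (E : Set History) (H : History) : Prop :=
  ∀ P : History, P <+: H → finalStateLUOpaque E P

/-! ### Database conditions -/

/-- `T_j` reads from `T_i` in `H` (unique writes). -/
def readsFrom (H : History) (j i : ℕ) : Prop :=
  ∃ x v kwi kwr kri krr : ℕ,
    opExec H i kwi kwr (Op.write x v) Resp.ok ∧
    opExec H j kri krr (Op.read x) (Resp.value v)

/-- Recoverability: if `T_j` reads from `T_i` then `T_i` commits before `T_j`
commits. -/
def recoverable (H : History) : Prop :=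
  ∀ i j : ℕ, i ≠ j → readsFrom H j i →
    ∀ kc' : ℕ, H[kc']? = some (Event.res j Resp.committed) →
      ∃ kc : ℕ, kc < kc' ∧ H[kc]? = some (Event.res i Resp.committed)

/-- Avoiding cascading aborts: whenever `T_j` reads `x` from `T_i`, the commit
response `C_i` precedes the read. -/
def ACA (H : History) : Prop :=
  ∀ i j x v kwi kwr kri krr : ℕ, i ≠ j →
    opExec H i kwi kwr (Op.write x v) Resp.ok →
    opExec H j kri krr (Op.read x) (Resp.value v) →
    ∃ m : ℕ, m < kri ∧ H[m]? = some (Event.res i Resp.committed)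

/-- Strictness. -/
def strictH (H : History) : Prop :=
  ∀ i j : ℕ, i ≠ j → ∀ x v v' ki kr kwi kwr : ℕ,
    (opExec H i ki kr (Op.read x) (Resp.value v) ∨ opExec H i ki kr (Op.write x v') Resp.ok) →
    opExec H j kwi kwr (Op.write x v) Resp.ok →
    kwr < ki →
    ∃ m : ℕ, m < ki ∧
      (H[m]? = some (Event.res j Resp.committed) ∨ H[m]? = some (Event.res j Resp.aborted))

end TM

/-!
Serializability only constrains committed transactions. In the example, `T_1` writes `1` to `x`,
`T_2` reads `1`, and then `T_1` overwrites `x` with `2`. Neither transaction has invoked `tryC`,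
so the completion aborts both; the serial history `T_1 · T_2` then has no committed transaction
whose legality must be checked, even though `T_2`'s read is not legal in it. Early release is
witnessed by the prefix that ends with `T_2`'s read, where `T_1` is still live.
-/

namespace TM

instance (H : History) (i : ℕ) : Decidable (inTxn H i) := by unfold inTxn; infer_instance
instance (H : History) (i : ℕ) : Decidable (committed H i) := by unfold committed; infer_instance
instance (H : History) (i : ℕ) : Decidable (aborted H i) := by unfold aborted; infer_instance
instance (H : History) (i : ℕ) : Decidable (commitPending H i) := by
  unfold commitPending; infer_instance
instance (H : History) (i : ℕ) : Decidable (live H i) := by unfold live; infer_instance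

lemma proj_append (i : ℕ) (A B : History) : proj i (A ++ B) = proj i A ++ proj i B :=
  List.filter_append A B

lemma mem_proj {H : History} {i : ℕ} {e : Event} : e ∈ proj i H ↔ e ∈ H ∧ e.txn = i := by
  simp [proj]

lemma proj_eq_nil_iff {H : History} {i : ℕ} : proj i H = [] ↔ ∀ e ∈ H, e.txn ≠ i := by
  simp [proj, List.filter_eq_nil_iff]

lemma proj_eq_self {H : History} {i : ℕ} (h : ∀ e ∈ H, e.txn = i) : proj i H = H :=
  List.filter_eq_self.2 (by simpa using h)

lemma inTxn_iff {H : History} {i : ℕ} : inTxn H i ↔ ∃ e ∈ H, e.txn = i := by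
  simp [inTxn, proj_eq_nil_iff]

lemma committed_iff_of_equivH {S C : History} (h : equivH S C) (i : ℕ) :
    committed S i ↔ committed C i := by
  rw [committed, committed, h i]

lemma not_committed_of_forall_ne {H : History} {i : ℕ}
    (h : Event.res i Resp.committed ∉ H) : ¬ committed H i :=
  fun hc => h (mem_proj.1 (hc.subset (by simp))).1

lemma equivH_proj_append_proj {C : History} {i j : ℕ} (hij : i ≠ j)
    (hC : ∀ e ∈ C, e.txn = i ∨ e.txn = j) : equivH (proj i C ++ proj j C) C := by
  intro k
  have hself : ∀ l, proj l (proj l C) = proj l C :=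
    fun l => proj_eq_self fun e he => (mem_proj.1 he).2
  have hnil : ∀ l l', l ≠ l' → proj l (proj l' C) = [] :=
    fun l l' hne => proj_eq_nil_iff.2 fun e he => (mem_proj.1 he).2 ▸ hne.symm
  rw [proj_append]
  by_cases hki : k = i
  · subst hki; rw [hself, hnil _ _ hij, List.append_nil]
  by_cases hkj : k = j
  · subst hkj; rw [hself, hnil _ _ hki]; rfl
  rw [hnil _ _ hki, hnil _ _ hkj, List.append_nil, eq_comm, proj_eq_nil_iff]
  intro e he hk
  rcases hC e he with h | h <;> simp_all

lemma rtPrec_append {A B : History} {i j : ℕ} (hij : i ≠ j) (hA : ∀ e ∈ A, e.txn = i)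
    (hB : ∀ e ∈ B, e.txn = j) (hA0 : A ≠ []) (hB0 : B ≠ []) : rtPrec (A ++ B) i j := by
  have hlen : 0 < A.length := List.length_pos_iff.2 hA0
  have hB0' : 0 < B.length := List.length_pos_iff.2 hB0
  have inA : ∀ m e, (A ++ B)[m]? = some e → m < A.length → e ∈ A := fun m e h hm =>
    List.mem_of_getElem? (by rwa [List.getElem?_append_left hm] at h)
  have inB : ∀ m e, (A ++ B)[m]? = some e → A.length ≤ m → e ∈ B := fun m e h hm =>
    List.mem_of_getElem? (by rwa [List.getElem?_append_right hm] at h)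
  refine ⟨A.length - 1, A.length, by omega, ⟨A[A.length - 1], ?_, hA _ (List.getElem_mem _)⟩,
    ⟨B[0], ?_, hB _ (List.getElem_mem _)⟩, fun m e h he => ?_, fun m e h he => ?_⟩
  · rw [List.getElem?_append_left (by omega), List.getElem?_eq_getElem]
  · rw [List.getElem?_append_right le_rfl, Nat.sub_self, List.getElem?_eq_getElem]
  · by_contra hm
    exact hij (he ▸ hB e (inB m e h (by omega)))
  · by_contra hm
    exact hij (he ▸ hA e (inA m e h (by omega))).symm

lemma sequential_append {A B : History} {i j : ℕ} (hA : ∀ e ∈ A, e.txn = i)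
    (hB : ∀ e ∈ B, e.txn = j) : sequential (A ++ B) := by
  have hmem : ∀ k, inTxn (A ++ B) k → (k = i ∧ A ≠ []) ∨ (k = j ∧ B ≠ []) := by
    intro k hk
    obtain ⟨e, he, rfl⟩ := inTxn_iff.1 hk
    rcases List.mem_append.1 he with he | he
    · exact Or.inl ⟨hA e he, List.ne_nil_of_mem he⟩
    · exact Or.inr ⟨hB e he, List.ne_nil_of_mem he⟩
  intro k l hk hl hkl
  rcases hmem k hk with ⟨rfl, hA0⟩ | ⟨rfl, hB0⟩ <;>
    rcases hmem l hl with ⟨rfl, hA0⟩ | ⟨rfl, hB0⟩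
  · exact absurd rfl hkl
  · exact Or.inl (rtPrec_append hkl hA hB hA0 hB0)
  · exact Or.inr (rtPrec_append hkl.symm hA hB hA0 hB0)
  · exact absurd rfl hkl

lemma isCompletion_append_abort {H T : History}
    (hH : ∀ i, inTxn H i →
      ¬ committed H i ∧ ¬ aborted H i ∧ ∃ r, (proj i H).getLast? = some (Event.res i r))
    (hT : ∀ i, inTxn H i → proj i T = [Event.inv i Op.tryCommit, Event.res i Resp.aborted])
    (hT' : ∀ i, ¬ inTxn H i → proj i T = []) : isCompletion H (H ++ T) := by
  have hproj : ∀ i, inTxn H i →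
      proj i (H ++ T) = proj i H ++ [Event.inv i Op.tryCommit, Event.res i Resp.aborted] :=
    fun i hi => by rw [proj_append, hT i hi]
  have hin : ∀ i, inTxn (H ++ T) i → inTxn H i := by
    intro i hi
    by_contra h
    apply hi
    rw [proj_append, hT' i h, List.append_nil]
    simpa [inTxn] using h
  have hpending : ∀ i o, inTxn H i → ¬ pendingInv H i o := by
    intro i o hi hp
    obtain ⟨r, hr⟩ := (hH i hi).2.2
    simp [pendingInv, hr] at hp
  refine ⟨List.prefix_append H T, hin, fun i hi => Or.inr ?_,
    fun i hi => ⟨?_, fun _ _ => ?_⟩⟩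
  · simp [aborted, hproj i (hin i hi)]
  · rintro (h | h)
    exacts [absurd h (hH i hi).1, absurd h (hH i hi).2.1]
  · exact ⟨fun h => absurd h (hpending i _ hi), fun ⟨_, _, h⟩ => absurd h (hpending i _ hi),
      fun _ => hproj i hi⟩

lemma serializable_of_no_commit {H C S : History} (hC : isCompletion H C) (hS : sequential S)
    (hSC : equivH S C) (hnc : ∀ i, Event.res i Resp.committed ∉ C) : serializable H :=
  ⟨C, S, hC, hS, hSC, fun i _ hi =>
    absurd ((committed_iff_of_equivH hSC i).1 hi) (not_committed_of_forall_ne (hnc i))⟩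

lemma opExec_of_succ {H : History} {i k : ℕ} {o : Op} {r : Resp}
    (hinv : H[k]? = some (Event.inv i o)) (hres : H[k + 1]? = some (Event.res i r)) :
    opExec H i k (k + 1) o r :=
  ⟨k.lt_succ_self, hinv, hres, fun _ _ h₁ h₂ _ => absurd h₂ (by omega)⟩

def writtenValue : Event → Option ℕ
  | .inv _ (.write _ v) => some v
  | _ => none

lemma uniqueWrites_of_nodup {H : History} (h0 : 0 ∉ H.filterMap writtenValue)
    (hnd : (H.filterMap writtenValue).Nodup) : uniqueWrites H := by
  intro k1 k2 i1 i2 x1 x2 v1 v2 h1 h2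
  refine ⟨fun hv => h0 (hv ▸ List.mem_filterMap.2 ⟨_, List.mem_of_getElem? h1, rfl⟩),
    fun hne hv => ?_⟩
  subst hv
  have hpw := List.pairwise_iff_getElem.1 (List.pairwise_filterMap.1 hnd)
  obtain ⟨hk1, e1⟩ := List.getElem?_eq_some_iff.1 h1
  obtain ⟨hk2, e2⟩ := List.getElem?_eq_some_iff.1 h2
  rcases lt_or_gt_of_ne hne with hlt | hlt
  · exact hpw k1 k2 hk1 hk2 hlt v1 (by rw [e1]; rfl) v1 (by rw [e2]; rfl) rfl
  · exact hpw k2 k1 hk2 hk1 hlt v1 (by rw [e2]; rfl) v1 (by rw [e1]; rfl) rfl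

def completeOps (i : ℕ) : List (Op × Resp) → History
  | [] => []
  | (o, r) :: ops => Event.inv i o :: Event.res i r :: completeOps i ops

lemma parity_of_getElem?_completeOps {i k : ℕ} {ops : List (Op × Resp)} {e : Event}
    (h : (completeOps i ops)[k]? = some e) :
    (k % 2 = 0 → isInvEvent e) ∧ (k % 2 = 1 → isResEvent e) := by
  induction ops generalizing k with
  | nil => simp [completeOps] at h
  | cons p ops ih =>
    obtain ⟨o, r⟩ := p
    match k, h with
    | 0, h =>
      obtain rfl : Event.inv i o = e := by simpa [completeOps] using h
      simp [isInvEvent]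
    | 1, h =>
      obtain rfl : Event.res i r = e := by simpa [completeOps] using h
      simp [isResEvent]
    | k + 2, h => simpa [Nat.add_mod_right] using ih h

lemma mem_completeOps {i : ℕ} {ops : List (Op × Resp)} {e : Event}
    (h : e ∈ completeOps i ops) : ∃ p ∈ ops, e = Event.inv i p.1 ∨ e = Event.res i p.2 := by
  induction ops with
  | nil => simp [completeOps] at h
  | cons p ops ih =>
    obtain ⟨o, r⟩ := p
    simp only [completeOps, List.mem_cons] at h
    rcases h with rfl | rfl | h
    · exact ⟨_, List.mem_cons_self, Or.inl rfl⟩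
    · exact ⟨_, List.mem_cons_self, Or.inr rfl⟩
    · obtain ⟨q, hq, he⟩ := ih h
      exact ⟨q, List.mem_cons_of_mem _ hq, he⟩

lemma wellFormedTxn_completeOps {i : ℕ} {ops : List (Op × Resp)}
    (hops : ∀ p ∈ ops, p.1 ≠ Op.tryCommit ∧ p.1 ≠ Op.tryAbort ∧
      p.2 ≠ Resp.committed ∧ p.2 ≠ Resp.aborted) :
    wellFormedTxn (completeOps i ((Op.init, Resp.ok) :: ops)) i := by
  have hall : ∀ p ∈ (Op.init, Resp.ok) :: ops, p.1 ≠ Op.tryCommit ∧ p.1 ≠ Op.tryAbort ∧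
      p.2 ≠ Resp.committed ∧ p.2 ≠ Resp.aborted := by
    simpa using hops
  have hexec : ∀ k e, (completeOps i ((Op.init, Resp.ok) :: ops))[k]? = some e →
      ∃ p ∈ (Op.init, Resp.ok) :: ops, e = Event.inv i p.1 ∨ e = Event.res i p.2 :=
    fun _ _ h => mem_completeOps (List.mem_of_getElem? h)
  refine ⟨fun k e h => parity_of_getElem?_completeOps h, fun _ => rfl, ?_, ?_⟩
  · rintro k (h | h) <;> obtain ⟨p, hp, he | he⟩ := hexec k _ h <;>
      have := hall p hp <;> simp_all
  · rintro k o h (rfl | rfl) <;> obtain ⟨p, hp, he | he⟩ := hexec k _ h <;>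
      have := hall p hp <;> simp_all

lemma wellFormedTxn_nil (i : ℕ) : wellFormedTxn [] i :=
  ⟨by simp, fun h => absurd rfl h, by simp, by simp⟩

namespace Example

def hist : History :=
  [.inv 1 .init, .res 1 .ok,
   .inv 1 (.write 0 1), .res 1 .ok,
   .inv 2 .init, .res 2 .ok,
   .inv 2 (.read 0), .res 2 (.value 1),
   .inv 1 (.write 0 2), .res 1 .ok]

def completion : History :=
  hist ++ [.inv 1 .tryCommit, .res 1 .aborted, .inv 2 .tryCommit, .res 2 .aborted]

lemma txn_eq_one_or_two_of_mem_completion : ∀ e ∈ completion, e.txn = 1 ∨ e.txn = 2 := by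
  decide

lemma eq_one_or_two_of_inTxn_hist {i : ℕ} (hi : inTxn hist i) : i = 1 ∨ i = 2 := by
  obtain ⟨e, he, rfl⟩ := inTxn_iff.1 hi
  exact txn_eq_one_or_two_of_mem_completion e (List.mem_append_left _ he)

lemma hist_wellFormed : wellFormed hist := by
  intro i
  by_cases hi : inTxn hist i
  · rcases eq_one_or_two_of_inTxn_hist hi with rfl | rfl
    · exact wellFormedTxn_completeOps (ops := [(.write 0 1, .ok), (.write 0 2, .ok)]) (by decide)
    · exact wellFormedTxn_completeOps (ops := [(.read 0, .value 1)]) (by decide)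
  · rw [show proj i hist = [] by simpa [inTxn] using hi]
    exact wellFormedTxn_nil i

lemma hist_uniqueWrites : uniqueWrites hist :=
  uniqueWrites_of_nodup (by decide) (by decide)

lemma isCompletion_hist : isCompletion hist completion := by
  refine isCompletion_append_abort (fun i hi => ?_) (fun i hi => ?_) (fun i hi => ?_)
  · rcases eq_one_or_two_of_inTxn_hist hi with rfl | rfl
    exacts [⟨by decide, by decide, .ok, rfl⟩, ⟨by decide, by decide, .value 1, rfl⟩]
  · rcases eq_one_or_two_of_inTxn_hist hi with rfl | rfl <;> rfl
  · have h1 : i ≠ 1 := by rintro rfl; exact hi (by decide)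
    have h2 : i ≠ 2 := by rintro rfl; exact hi (by decide)
    exact proj_eq_nil_iff.2 (by simp [Event.txn, h1.symm, h2.symm])

lemma hist_serializable : serializable hist :=
  serializable_of_no_commit (S := proj 1 completion ++ proj 2 completion) isCompletion_hist
    (sequential_append (fun _ he => (mem_proj.1 he).2) (fun _ he => (mem_proj.1 he).2))
    (equivH_proj_append_proj (by decide) txn_eq_one_or_two_of_mem_completion)
    (by simp [completion, hist])

lemma hist_releasesEarly : releasesEarly hist 1 0 := by
  refine ⟨hist.take 8, List.take_prefix _ _, by decide, 2, 1, 2, 3, 6, 7, by decide,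
    opExec_of_succ rfl rfl, opExec_of_succ rfl rfl, fun m v _ h => ?_, by decide⟩
  simpa [hist] using List.mem_of_getElem? h

lemma hist_overwriting : overwriting hist 1 2 0 :=
  ⟨by decide, hist_releasesEarly, 1, 2, 2, 3, 8, 9, 6, 7, opExec_of_succ rfl rfl,
    opExec_of_succ rfl rfl, by decide, opExec_of_succ rfl rfl, by decide⟩

end Example

/-- Serializability supports overwriting: there exists a
serializable (well-formed, unique-writes) history `H` with transactions
`T_i`, `T_j` and a variable `x` such that `T_i` releases `x` early in `H`,
`H|T_i` contains two write executions `w_i(x,v)→ok_i` and `w_i(x,v')→ok_i`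
with the former preceding the latter, and `H|T_j` contains a read execution
`r_j(x)→v` that precedes `w_i(x,v')→ok_i` in `H`. -/
theorem serializability_supports_overwriting :
    ∃ (H : History) (i j x : ℕ),
      wellFormed H ∧ uniqueWrites H ∧ serializable H ∧ overwriting H i j x :=
  ⟨Example.hist, 1, 2, 0, Example.hist_wellFormed, Example.hist_uniqueWrites,
    Example.hist_serializable, Example.hist_overwriting⟩

end TM
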